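/- arXiv:2508.01606 — 2 statements merged into one kernel-verified Lean document; each statement's English description precedes it below -/
import Mathlib

section
/- Let D be a directed graph and R a reorientation of its transitive closure tc(D). Define orn_R(v) as the inclusion-maximal ornament of D at v contained in the set of vertices u admitting a directed path to v within the reversed edges rev(R). Then orn_R is an ornamentation of D. -/
/-- A directed path from `u` to `v` in the digraph `D` using only vertices of `U`. -/
def pathIn {V : Type*} (D : V → V → Prop) (U : Set V) (u v : V) : Prop :=
  Relation.ReflTransGen (fun a b => D a b ∧ a ∈ U ∧ b ∈ U) u v

/-- An ornament of `D` at `v`. -/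
def IsOrnament {V : Type*} (D : V → V → Prop) (v : V) (U : Set V) : Prop :=
  v ∈ U ∧ ∀ u ∈ U, pathIn D U u v

/-- An ornamentation of `D`. -/
def IsOrnamentation {V : Type*} (D : V → V → Prop) (O : V → Set V) : Prop :=
  (∀ v, IsOrnament D v (O v)) ∧ ∀ u v, u ∈ O v → O u ⊆ O v

/-- The inclusion maximal ornament of `D` at `v` contained in `X`. -/
def maxOrnIn {V : Type*} (D : V → V → Prop) (v : V) (X : Set V) : Set V :=
  ⋃₀ {U | IsOrnament D v U ∧ U ⊆ X}

/-- The ornamentation `orn_R` associated to a reorientation of `tc(D)` with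
reversed edge set `rev`: the maximal ornament at `v` contained in the set of
vertices having a directed path to `v` within `rev`. -/
def ornOfRev {V : Type*} (D rev : V → V → Prop) (v : V) : Set V :=
  maxOrnIn D v {u | Relation.ReflTransGen rev u v}

/-! Maximal ornaments inside a family of sets `X v ∋ v` with `u ∈ X v → X u ⊆ X v` form an
ornamentation: ornaments are closed under unions, so `maxOrnIn D v (X v)` is itself an ornament,
and if `u` lies in an ornament `U` at `v` then `maxOrnIn D u (X u) ∪ U` is again an ornament at
`v` inside `X v`. For `orn_R` the family is `X v = {u | u ⟶* v in rev(R)}`. -/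

section Ornament

variable {V : Type*} {D : V → V → Prop}

theorem pathIn_mono {U W : Set V} (h : U ⊆ W) {u v : V} (hp : pathIn D U u v) :
    pathIn D W u v :=
  Relation.ReflTransGen.mono (fun _ _ ⟨hd, ha, hb⟩ => ⟨hd, h ha, h hb⟩) u v hp

theorem isOrnament_singleton (v : V) : IsOrnament D v {v} :=
  ⟨rfl, fun _ hu => hu ▸ Relation.ReflTransGen.refl⟩

theorem IsOrnament.union {u v : V} {A B : Set V} (hA : IsOrnament D u A)
    (hB : IsOrnament D v B) (huB : u ∈ B) : IsOrnament D v (A ∪ B) := by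
  refine ⟨Or.inr hB.1, ?_⟩
  rintro w (hw | hw)
  · exact (pathIn_mono Set.subset_union_left (hA.2 w hw)).trans
      (pathIn_mono Set.subset_union_right (hB.2 u huB))
  · exact pathIn_mono Set.subset_union_right (hB.2 w hw)

theorem subset_maxOrnIn {v : V} {U X : Set V} (hU : IsOrnament D v U) (hUX : U ⊆ X) :
    U ⊆ maxOrnIn D v X :=
  Set.subset_sUnion_of_mem ⟨hU, hUX⟩

theorem maxOrnIn_subset (v : V) (X : Set V) : maxOrnIn D v X ⊆ X :=
  Set.sUnion_subset fun _ hU => hU.2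

theorem isOrnament_maxOrnIn {v : V} {X : Set V} (hv : v ∈ X) :
    IsOrnament D v (maxOrnIn D v X) := by
  refine ⟨subset_maxOrnIn (isOrnament_singleton v) (Set.singleton_subset_iff.2 hv) rfl, ?_⟩
  rintro u ⟨U, ⟨hU, hUX⟩, huU⟩
  exact pathIn_mono (subset_maxOrnIn hU hUX) (hU.2 u huU)

theorem isOrnamentation_maxOrnIn (X : V → Set V) (hmem : ∀ v, v ∈ X v)
    (hsubset : ∀ u v, u ∈ X v → X u ⊆ X v) :
    IsOrnamentation D fun v => maxOrnIn D v (X v) := by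
  refine ⟨fun v => isOrnament_maxOrnIn (hmem v), ?_⟩
  rintro u v ⟨U, ⟨hU, hUX⟩, huU⟩
  have hXu : maxOrnIn D u (X u) ⊆ X v := (maxOrnIn_subset u (X u)).trans (hsubset u v (hUX huU))
  exact Set.subset_union_left.trans
    (subset_maxOrnIn ((isOrnament_maxOrnIn (hmem u)).union hU huU) (Set.union_subset hXu hUX))

end Ornament

theorem ornOfRev_isOrnamentation_general {V : Type*} (D rev : V → V → Prop) :
    IsOrnamentation D (ornOfRev D rev) :=
  isOrnamentation_maxOrnIn (fun v => {u | Relation.ReflTransGen rev u v})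
    (fun _ => Relation.ReflTransGen.refl) fun _ _ huv _ hwu => hwu.trans huv

/-- For any reorientation `R` of `tc(D)`, the map `orn_R` is an ornamentation of `D`. -/
theorem ornOfRev_isOrnamentation {V : Type*} (D rev : V → V → Prop)
    (hrev : ∀ u v, rev u v → Relation.TransGen D u v) :
    IsOrnamentation D (ornOfRev D rev) :=
  ornOfRev_isOrnamentation_general D rev
end

section
/- The map S ↦ orn_S is injective on acyclic sourcings of P(D): if S₁ and S₂ are distinct acyclic sourcings of the path hypergraph of an increasing directed graph D, then the ornamentations orn_{S₁} and orn_{S₂} differ. -/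
/-- `IsPathSet D P u v` : `P` is the vertex set of a directed path in `D` from `u` to `v`. -/
inductive IsPathSet {V : Type*} (D : V → V → Prop) : Set V → V → V → Prop
  | single (v : V) : IsPathSet D {v} v v
  | cons {u w v : V} {P : Set V} :
      D u w → IsPathSet D P w v → u ∉ P → IsPathSet D (insert u P) u v

/-- The path hypergraph of `D`. -/
def PathHyp {V : Type*} (D : V → V → Prop) : Set (Set V) :=
  {P | ∃ u v, IsPathSet D P u v}

/-- A sourcing of the path hypergraph of `D`. -/
def IsSourcing {V : Type*} (D : V → V → Prop) (S : Set V → V) : Prop :=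
  ∀ P ∈ PathHyp D, S P ∈ P

/-- An acyclic sourcing of the path hypergraph of `D`. -/
def AcyclicSourcing {V : Type*} (D : V → V → Prop) (S : Set V → V) : Prop :=
  IsSourcing D S ∧
    ¬ ∃ (k : ℕ) (H : Fin (k + 1) → Set V),
        (∀ i, H i ∈ PathHyp D) ∧ Function.Injective H ∧
          ∀ i : Fin (k + 1), S (H i) ∈ H (i + 1) ∧ S (H i) ≠ S (H (i + 1))

/-- `rev(S)`: pairs `(u,v)` such that some directed path `P` from `u` to `v` has `S P = v`. -/
def revOfSourcing {V : Type*} (D : V → V → Prop) (S : Set V → V) : V → V → Prop :=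
  fun u v => ∃ P, IsPathSet D P u v ∧ S P = v

/-! ### Auxiliary lemmas -/

section Paths

variable {V : Type*} {D : V → V → Prop}

lemma IsPathSet.start_mem {P : Set V} {u v : V} (h : IsPathSet D P u v) : u ∈ P := by
  cases h with
  | single v => rfl
  | cons hDe hP hu => exact Set.mem_insert _ _

lemma IsPathSet.end_mem {P : Set V} {u v : V} (h : IsPathSet D P u v) : v ∈ P := by
  induction h with
  | single v => rfl
  | cons hDe hP hu ih => exact Set.mem_insert_of_mem _ ih

lemma IsPathSet.pathHyp {P : Set V} {u v : V} (h : IsPathSet D P u v) : P ∈ PathHyp D :=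
  ⟨u, v, h⟩

lemma pathIn_of_isPathSet {Q P : Set V} {u v : V} (h : IsPathSet D Q u v) (hQP : Q ⊆ P) :
    pathIn D P u v := by
  induction h with
  | single v => exact Relation.ReflTransGen.refl
  | @cons u w v Q' hDe hQ hu ih =>
    exact Relation.ReflTransGen.head
      ⟨hDe, hQP (Set.mem_insert _ _), hQP (Set.mem_insert_of_mem _ hQ.start_mem)⟩
      (ih fun p hp => hQP (Set.mem_insert_of_mem _ hp))

variable [LinearOrder V]

lemma IsPathSet.start_le (hD : ∀ u v, D u v → u < v) {P : Set V} {u v : V}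
    (h : IsPathSet D P u v) : ∀ p ∈ P, u ≤ p := by
  induction h with
  | single v => intro p hp; rw [hp]
  | @cons u w v P hDe hP hu ih =>
    intro p hp
    rcases hp with rfl | hp
    · exact le_rfl
    · exact (hD _ _ hDe).le.trans (ih p hp)

lemma IsPathSet.le_end (hD : ∀ u v, D u v → u < v) {P : Set V} {u v : V}
    (h : IsPathSet D P u v) : ∀ p ∈ P, p ≤ v := by
  induction h with
  | single v => intro p hp; rw [hp]
  | @cons u w v P hDe hP hu ih =>
    intro p hp
    rcases hp with rfl | hp
    · exact (hD _ _ hDe).le.trans (ih w hP.start_mem)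
    · exact ih p hp

lemma IsPathSet.suffixPath (hD : ∀ u v, D u v → u < v) {P : Set V} {u v : V}
    (h : IsPathSet D P u v) {x : V} (hx : x ∈ P) :
    IsPathSet D {p ∈ P | x ≤ p} x v := by
  induction h with
  | single v =>
    rcases hx with rfl
    have : {p ∈ ({x} : Set V) | x ≤ p} = {x} := by
      ext p
      simp only [Set.mem_setOf_eq, Set.mem_singleton_iff]
      exact ⟨fun h => h.1, fun h => ⟨h, h.ge⟩⟩
    rw [this]
    exact IsPathSet.single x
  | @cons u w v P hDe hP hu ih =>
    rcases hx with rfl | hx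
    · have : {p ∈ insert x P | x ≤ p} = insert x P := by
        ext p
        refine ⟨fun h => h.1, fun hp => ⟨hp, ?_⟩⟩
        rcases hp with rfl | hp
        · exact le_rfl
        · exact (hD _ _ hDe).le.trans (hP.start_le hD p hp)
      rw [this]
      exact IsPathSet.cons hDe hP hu
    · have hux : u < x := (hD _ _ hDe).trans_le (hP.start_le hD x hx)
      have : {p ∈ insert u P | x ≤ p} = {p ∈ P | x ≤ p} := by
        ext p
        simp only [Set.mem_setOf_eq, Set.mem_insert_iff]
        constructor
        · rintro ⟨rfl | hp, hxp⟩
          · exact absurd (hxp.trans_lt hux) (lt_irrefl _)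
          · exact ⟨hp, hxp⟩
        · rintro ⟨hp, hxp⟩; exact ⟨Or.inr hp, hxp⟩
      rw [this]
      exact ih hx

lemma IsPathSet.prefixPath (hD : ∀ u v, D u v → u < v) {P : Set V} {u v : V}
    (h : IsPathSet D P u v) {x : V} (hx : x ∈ P) :
    IsPathSet D {p ∈ P | p ≤ x} u x := by
  induction h with
  | single v =>
    rcases hx with rfl
    have : {p ∈ ({x} : Set V) | p ≤ x} = {x} := by
      ext p
      simp only [Set.mem_setOf_eq, Set.mem_singleton_iff]
      exact ⟨fun h => h.1, fun h => ⟨h, h.le⟩⟩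
    rw [this]
    exact IsPathSet.single x
  | @cons u w v P hDe hP hu ih =>
    rcases hx with rfl | hx
    · have : {p ∈ insert x P | p ≤ x} = {x} := by
        ext p
        simp only [Set.mem_setOf_eq, Set.mem_insert_iff, Set.mem_singleton_iff]
        constructor
        · rintro ⟨rfl | hp, hpx⟩
          · rfl
          · exact absurd (((hD _ _ hDe).trans_le (hP.start_le hD p hp)).trans_le hpx)
              (lt_irrefl _)
        · rintro rfl; exact ⟨Or.inl rfl, le_rfl⟩
      rw [this]
      exact IsPathSet.single x
    · have hux : u < x := (hD _ _ hDe).trans_le (hP.start_le hD x hx)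
      have : {p ∈ insert u P | p ≤ x} = insert u {p ∈ P | p ≤ x} := by
        ext p
        simp only [Set.mem_setOf_eq, Set.mem_insert_iff]
        constructor
        · rintro ⟨rfl | hp, hpx⟩
          · exact Or.inl rfl
          · exact Or.inr ⟨hp, hpx⟩
        · rintro (rfl | ⟨hp, hpx⟩)
          · exact ⟨Or.inl rfl, hux.le⟩
          · exact ⟨Or.inr hp, hpx⟩
      rw [this]
      exact IsPathSet.cons hDe (ih hx) fun hc => hu hc.1

lemma exists_segment (hD : ∀ u v, D u v → u < v) {P : Set V} {u v : V}
    (h : IsPathSet D P u v) {w x : V} (hw : w ∈ P) (hx : x ∈ P) (hwx : w ≤ x) :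
    ∃ R, R ⊆ P ∧ IsPathSet D R w x := by
  have hs := h.suffixPath hD hw
  have hx' : x ∈ {p ∈ P | w ≤ p} := ⟨hx, hwx⟩
  have hp := hs.prefixPath hD hx'
  exact ⟨_, fun p hp' => hp'.1.1, hp⟩

end Paths

/-! ### The triangle relation on hyperedges and acyclicity -/

/-- The relation `H ⊲ H'` : `S H ∈ H' \ {S H'}`. -/
def Tri {V : Type*} (D : V → V → Prop) (S : Set V → V) (A B : Set V) : Prop :=
  A ∈ PathHyp D ∧ B ∈ PathHyp D ∧ S A ∈ B ∧ S A ≠ S B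

lemma transGen_walk {α : Type*} {r : α → α → Prop} {a b : α} (h : Relation.TransGen r a b) :
    ∃ m, 0 < m ∧ ∃ c : ℕ → α, c 0 = a ∧ c m = b ∧ ∀ i < m, r (c i) (c (i + 1)) := by
  induction h with
  | @single b' hr =>
    refine ⟨1, one_pos, fun i => if i = 0 then a else b', by simp, by simp, ?_⟩
    intro i hi
    interval_cases i
    simpa using hr
  | @tail b' c' hab hr ih =>
    obtain ⟨m, hm, c, hc0, hcm, hstep⟩ := ih
    refine ⟨m + 1, by omega, fun i => if i ≤ m then c i else c', ?_, ?_, ?_⟩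
    · simp [hc0]
    · simp
    · intro i hi
      rcases lt_or_eq_of_le (Nat.lt_succ_iff.mp hi) with hi' | hi'
      · have h1 : i ≤ m := hi'.le
        have h2 : i + 1 ≤ m := hi'
        simp only [if_pos h1, if_pos h2]
        exact hstep i hi'
      · subst hi'
        have h1 : i ≤ i := le_rfl
        have h2 : ¬ (i + 1 ≤ i) := by omega
        simp only [if_pos h1, if_neg h2, hcm]
        exact hr

lemma cycle_free {V : Type*} [Finite V] {D : V → V → Prop} {S : Set V → V}
    (hS : AcyclicSourcing D S) (H : Set V) : ¬ Relation.TransGen (Tri D S) H H := by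
  classical
  intro hT
  obtain ⟨m, hm, c, hc0, hcm, hstep⟩ := transGen_walk hT
  have hex : ∃ m, 0 < m ∧ ∃ c : ℕ → Set V,
      c m = c 0 ∧ ∀ i < m, Tri D S (c i) (c (i + 1)) :=
    ⟨m, hm, c, by rw [hc0, hcm], hstep⟩
  obtain ⟨hm₀pos, c₀, hcc, hstep₀⟩ := Nat.find_spec hex
  set m₀ := Nat.find hex with hm₀
  -- no repeats strictly inside the minimal closed walk
  have hnorep : ∀ i j, i < j → j < m₀ → c₀ i = c₀ j → False := by
    intro i j hij hj hceq
    have : ∃ c : ℕ → Set V, c (j - i) = c 0 ∧ ∀ t < j - i, Tri D S (c t) (c (t + 1)) := by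
      refine ⟨fun t => c₀ (i + t), ?_, ?_⟩
      · show c₀ (i + (j - i)) = c₀ (i + 0)
        have e1 : i + (j - i) = j := by omega
        have e2 : i + 0 = i := by omega
        rw [e1, e2, hceq]
      · intro t ht
        show Tri D S (c₀ (i + t)) (c₀ (i + (t + 1)))
        have h1 : i + t < m₀ := by omega
        have h2 : i + (t + 1) = i + t + 1 := by omega
        rw [h2]
        exact hstep₀ _ h1
    have hlt : j - i < m₀ := by omega
    exact Nat.find_min hex hlt ⟨by omega, this⟩
  -- m₀ ≥ 2 since Tri is irreflexive
  have hm₀2 : 2 ≤ m₀ := by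
    by_contra h
    have : m₀ = 1 := by omega
    have h1 := hstep₀ 0 (by omega)
    rw [show (0 : ℕ) + 1 = m₀ from by omega, hcc] at h1
    exact h1.2.2.2 rfl
  obtain ⟨k, hk⟩ : ∃ k, m₀ = k + 1 := ⟨m₀ - 1, by omega⟩
  refine hS.2 ⟨k, fun i : Fin (k + 1) => c₀ i.val, ?_, ?_, ?_⟩
  · intro i
    have hi : i.val < m₀ := by have := i.isLt; omega
    exact (hstep₀ i.val hi).1
  · intro i j hij
    have hij' : c₀ i.val = c₀ j.val := hij
    by_contra hne
    rcases lt_trichotomy i.val j.val with h | h | h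
    · exact hnorep i.val j.val h (by have := j.isLt; omega) hij'
    · exact hne (Fin.ext h)
    · exact hnorep j.val i.val h (by have := i.isLt; omega) hij'.symm
  · intro i
    have hi : i.val < m₀ := by have := i.isLt; omega
    have hstepi := hstep₀ i.val hi
    have hwrap : c₀ ((i + 1 : Fin (k + 1)).val) = c₀ (i.val + 1) := by
      rw [Fin.val_add_one]
      split_ifs with hlast
      · have he : i.val + 1 = m₀ := by
          rw [hk, hlast]; simp [Fin.last]
        rw [he, hcc]
      · rfl
    show S (c₀ i.val) ∈ c₀ ((i + 1 : Fin (k + 1)).val) ∧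
      S (c₀ i.val) ≠ S (c₀ ((i + 1 : Fin (k + 1)).val))
    rw [hwrap]
    exact ⟨hstepi.2.2.1, hstepi.2.2.2⟩

lemma tri_wf {V : Type*} [Finite V] {D : V → V → Prop} {S : Set V → V}
    (hS : AcyclicSourcing D S) :
    WellFounded (fun Q P : Set V => Tri D S P Q) := by
  have hirr : IsIrrefl (Set V) (Relation.TransGen fun Q P : Set V => Tri D S P Q) := by
    constructor
    intro a ha
    exact cycle_free hS a (Relation.transGen_swap.mp ha)
  have hwf : WellFounded (Relation.TransGen fun Q P : Set V => Tri D S P Q) :=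
    Finite.wellFounded_of_trans_of_irrefl _
  exact Subrelation.wf (r := Relation.TransGen fun Q P : Set V => Tri D S P Q)
    (q := fun Q P : Set V => Tri D S P Q)
    (fun h => Relation.TransGen.single h) hwf

/-! ### Every vertex below the source of a path reaches the source in `rev(S)` -/

lemma reach_source {V : Type*} [Finite V] [LinearOrder V] {D : V → V → Prop}
    (hD : ∀ u v, D u v → u < v) {S : Set V → V} (hS : AcyclicSourcing D S)
    (P : Set V) :
    ∀ u v, IsPathSet D P u v → ∀ w ∈ P, w ≤ S P →
      Relation.ReflTransGen (revOfSourcing D S) w (S P) := by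
  induction P using (tri_wf hS).induction with
  | _ P IH =>
  intro u v hP w hw hwle
  have hx : S P ∈ P := hS.1 P hP.pathHyp
  -- inner induction on the distance from w up to S P within the order
  have key : ∀ (t : Finset V), ∀ w ∈ P, w ≤ S P →
      {z : V | w < z ∧ z ≤ S P} ⊆ ↑t →
      Relation.ReflTransGen (revOfSourcing D S) w (S P) := by
    intro t
    induction t using Finset.strongInduction with
    | _ t iht =>
    intro w hw hwle hsub
    rcases eq_or_lt_of_le hwle with heq | hlt
    · rw [heq]
    obtain ⟨R, hRP, hR⟩ := exists_segment hD hP hw hx hwle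
    have hyR : S R ∈ R := hS.1 R hR.pathHyp
    have hyx : S R ≤ S P := hR.le_end hD _ hyR
    have hwy : w ≤ S R := hR.start_le hD _ hyR
    rcases eq_or_lt_of_le hyx with hyx' | hyx'
    · exact Relation.ReflTransGen.single ⟨R, hR, hyx'⟩
    rcases eq_or_lt_of_le hwy with hwy' | hwy'
    · exfalso
      have t1 : Tri D S P R :=
        ⟨hP.pathHyp, hR.pathHyp, hR.end_mem, (ne_of_lt hyx').symm⟩
      have t2 : Tri D S R P :=
        ⟨hR.pathHyp, hP.pathHyp, hwy' ▸ hw, fun hc => absurd (hwy'.trans hc) (ne_of_lt hlt)⟩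
      exact cycle_free hS P (Relation.TransGen.head t1 (Relation.TransGen.single t2))
    · -- w < S R < S P
      have tPR : Tri D S P R :=
        ⟨hP.pathHyp, hR.pathHyp, hR.end_mem, (ne_of_lt hyx').symm⟩
      have hreach1 : Relation.ReflTransGen (revOfSourcing D S) w (S R) :=
        IH R tPR w (S P) hR w hR.start_mem hwy
      have hSRt : S R ∈ t := hsub ⟨hwy', hyx'.le⟩
      have hreach2 : Relation.ReflTransGen (revOfSourcing D S) (S R) (S P) := by
        refine iht (t.erase (S R)) (Finset.erase_ssubset hSRt) (S R) (hRP hyR) hyx'.le ?_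
        intro z hz
        refine Finset.mem_erase.2 ⟨?_, hsub ⟨hwy'.trans hz.1, hz.2⟩⟩
        exact ne_of_gt hz.1
      exact hreach1.trans hreach2
  classical
  have : Fintype V := Fintype.ofFinite V
  exact key Finset.univ w hw hwle (fun z _ => Finset.mem_univ z)

/-! ### From a `rev`-chain to a `Tri`-cycle -/

lemma chain_cycle {V : Type*} {D : V → V → Prop} {S : Set V → V}
    {a x : V} (h : Relation.ReflTransGen (revOfSourcing D S) a x) :
    ∀ H, a ≠ x → S H = a → H ∈ PathHyp D →
      ∃ H', Relation.TransGen (Tri D S) H H' ∧ S H' = x ∧ H' ∈ PathHyp D := by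
  induction h with
  | refl => intro H hax _ _; exact absurd rfl hax
  | @tail b c hab hbc ih =>
    intro H hax hSH hH
    obtain ⟨Q, hQ, hSQ⟩ := hbc
    by_cases hab' : a = b
    · subst hab'
      refine ⟨Q, Relation.TransGen.single ⟨hH, hQ.pathHyp, hSH ▸ hQ.start_mem, ?_⟩,
        hSQ, hQ.pathHyp⟩
      rw [hSH, hSQ]; exact hax
    · obtain ⟨H₁, hTH, hSH₁, hH₁⟩ := ih H hab' hSH hH
      by_cases hbc' : b = c
      · exact ⟨H₁, hTH, hbc' ▸ hSH₁, hH₁⟩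
      · refine ⟨Q, hTH.tail ⟨hH₁, hQ.pathHyp, hSH₁ ▸ hQ.start_mem, ?_⟩, hSQ, hQ.pathHyp⟩
        rw [hSH₁, hSQ]; exact hbc'

/-! ### The main asymmetric lemma -/

lemma main_lt {V : Type*} [Finite V] [LinearOrder V] {D : V → V → Prop}
    (hD : ∀ u v, D u v → u < v) {S S' : Set V → V}
    (hS : AcyclicSourcing D S) (hS' : AcyclicSourcing D S')
    (horn : ornOfRev D (revOfSourcing D S) = ornOfRev D (revOfSourcing D S'))
    {P : Set V} (hPH : P ∈ PathHyp D) (hlt : S P < S' P) : False := by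
  obtain ⟨u, v, hP⟩ := hPH
  have hs'P : S' P ∈ P := hS'.1 P hP.pathHyp
  have hsP : S P ∈ P := hS.1 P hP.pathHyp
  have hpre := hP.prefixPath hD hs'P
  set P' : Set V := {p ∈ P | p ≤ S' P} with hP'
  have hP'orn : P' ⊆ ornOfRev D (revOfSourcing D S') (S' P) := by
    intro q hq
    have horn1 : IsOrnament D (S' P) P' := by
      refine ⟨⟨hs'P, le_rfl⟩, ?_⟩
      intro q' hq'
      have hsuf := hpre.suffixPath hD hq'
      exact pathIn_of_isPathSet hsuf fun p hp => hp.1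
    have hsub : P' ⊆ {q | Relation.ReflTransGen (revOfSourcing D S') q (S' P)} := by
      intro q' hq'
      exact reach_source hD hS' P u v hP q' hq'.1 hq'.2
    exact Set.mem_sUnion.2 ⟨P', ⟨horn1, hsub⟩, hq⟩
  have hs_orn : S P ∈ ornOfRev D (revOfSourcing D S) (S' P) := by
    rw [horn]
    exact hP'orn ⟨hsP, hlt.le⟩
  have hreach : Relation.ReflTransGen (revOfSourcing D S) (S P) (S' P) := by
    obtain ⟨U, ⟨_, hUsub⟩, hsU⟩ := Set.mem_sUnion.1 hs_orn
    exact hUsub hsU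
  obtain ⟨H', hTH, hSH', hH'⟩ := chain_cycle hreach P (ne_of_lt hlt) rfl hP.pathHyp
  have htri : Tri D S H' P := ⟨hH', hP.pathHyp, hSH' ▸ hs'P, by
    rw [hSH']; exact (ne_of_lt hlt).symm⟩
  exact cycle_free hS P (hTH.tail htri)

/-- The map `S ↦ orn_S` is injective on acyclic sourcings of `P(D)`: distinct acyclic
sourcings (differing on some hyperedge) yield distinct ornamentations. -/
theorem ornOfSourcing_injective {n : ℕ} (D : Fin n → Fin n → Prop)
    (hD : ∀ u v, D u v → u < v) (S₁ S₂ : Set (Fin n) → Fin n)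
    (h₁ : AcyclicSourcing D S₁) (h₂ : AcyclicSourcing D S₂)
    (hne : ∃ P ∈ PathHyp D, S₁ P ≠ S₂ P) :
    ornOfRev D (revOfSourcing D S₁) ≠ ornOfRev D (revOfSourcing D S₂) := by
  intro horn
  obtain ⟨P, hPH, hne⟩ := hne
  rcases lt_or_gt_of_ne hne with h | h
  · exact main_lt hD h₁ h₂ horn hPH h
  · exact main_lt hD h₂ h₁ horn.symm hPH h
end
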